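/- arXiv:1810.05085 — 4 statements merged into one kernel-verified Lean document; each statement's English description precedes it below -/
import Mathlib

section
/- Let M be a compact manifold and X a C¹ vector field. If X is separating, then X has collinear C¹-centralizer: for every C¹ vector field Y with [X,Y]=0 and every x ∈ M, the span of X(x) and Y(x) has dimension at most 1. -/
open Manifold Filter Topology Set Module

/-!
If `ψ` is the flow of `Y` and commutes with the flow `φ` of `X`, then for small `s` the point
`ψ s x` stays `ε`-close to `x` along the whole `φ`-orbit (a compactness argument in charts bounds
the displacement of `ψ s` uniformly), so by separation `ψ s x = φ τ x` for some `τ`. The pairs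
`(s, τ)` with this property form a subgroup of `ℝ²` projecting onto an interval, hence an
uncountable one, so they accumulate at `0`. Differentiating `ψ s x = φ τ x` in a chart at `x` along
a nonzero tangent direction `(a, b)` of this set gives `a • Y x = b • X x`.
-/

theorem finrank_span_pair_le_one {K V : Type*} [Field K] [AddCommGroup V] [Module K V]
    {x y : V} {a b : K} (hab : (a, b) ≠ 0) (h : a • x = b • y) :
    finrank K (Submodule.span K {x, y}) ≤ 1 := by
  wlog ha : a ≠ 0 generalizing x y a b
  · have hb : b ≠ 0 := by rintro rfl; simp_all
    rw [Set.pair_comm]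
    exact this (by simp [hb]) h.symm hb
  have hx : x ∈ Submodule.span K {y} := by
    rw [Submodule.mem_span_singleton]
    exact ⟨a⁻¹ * b, by rw [mul_smul, ← h, inv_smul_smul₀ ha]⟩
  rw [Submodule.span_insert_eq_span hx]
  exact (finrank_span_le_card ({y} : Set V)).trans (by simp)

theorem accPt_zero_of_sub_mem_of_not_countable {G : Type*} [TopologicalSpace G] [AddGroup G]
    [IsTopologicalAddGroup G] [SecondCountableTopology G] {S : Set G}
    (hS : ∀ a ∈ S, ∀ b ∈ S, a - b ∈ S) (hSc : ¬ S.Countable) : AccPt 0 (𝓟 S) := by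
  by_contra h
  obtain ⟨U, hU, hUS⟩ : ∃ U ∈ 𝓝 (0 : G), ∀ y ∈ U ∩ S, y = 0 := by
    simpa [accPt_iff_nhds] using h
  have hiso : ∀ a ∈ S, {a} ∈ 𝓝[S] a := fun a ha =>
    mem_nhdsWithin_iff_exists_mem_nhds_inter.2
      ⟨(· - a) ⁻¹' U, (continuous_sub_right a).continuousAt.preimage_mem_nhds (by simpa using hU),
        fun b hb => sub_eq_zero.1 (hUS _ ⟨hb.1, hS b hb.2 a ha⟩)⟩
  obtain ⟨t, -, htc, hSt⟩ := TopologicalSpace.countable_cover_nhdsWithin hiso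
  exact hSc (htc.mono (by simpa using hSt))

theorem HasFDerivAt.exists_ne_zero_apply_eq_zero_of_accPt {𝕜 E F : Type*}
    [NontriviallyNormedField 𝕜] [NormedAddCommGroup E] [NormedSpace 𝕜 E] [ProperSpace E]
    [NormedAddCommGroup F] [NormedSpace 𝕜 F] {f : E → F} {f' : E →L[𝕜] F} {x : E} {s : Set E}
    (hf : HasFDerivAt f f' x) (hs : ∀ y ∈ s, f y = f x) (hx : AccPt x (𝓟 s)) :
    ∃ v ≠ 0, f' v = 0 := by
  obtain ⟨v, hv, hv0⟩ := tangentConeAt_nonempty_of_properSpace (𝕜 := 𝕜) hx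
  have hconst : HasFDerivWithinAt f (0 : E →L[𝕜] F) s x :=
    (hasFDerivWithinAt_const (f x) x s).congr hs rfl
  exact ⟨v, hv0, hf.hasFDerivWithinAt.unique_on hconst hv⟩

theorem HasDerivAt.eventually_norm_sub_le {E : Type*} [NormedAddCommGroup E] [NormedSpace ℝ E]
    {f : ℝ → E} {y : E} {t C : ℝ} (hf : HasDerivAt f y t) (hC : ‖y‖ < C) :
    ∀ᶠ w in 𝓝 t, ‖f w - f t‖ ≤ C * |w - t| := by
  filter_upwards [(hasDerivAt_iff_isLittleO.mp hf).def (sub_pos.2 hC)] with w hw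
  calc ‖f w - f t‖ ≤ ‖f w - f t - (w - t) • y‖ + ‖(w - t) • y‖ := norm_le_norm_sub_add _ _
    _ ≤ (C - ‖y‖) * |w - t| + |w - t| * ‖y‖ :=
        add_le_add (by simpa using hw) (by rw [norm_smul, Real.norm_eq_abs])
    _ = C * |w - t| := by ring

theorem forall_mem_Icc_mem_and_dist_le_of_hasDerivAt {M E : Type*} [TopologicalSpace M] [T2Space M]
    [NormedAddCommGroup E] [NormedSpace ℝ E] {U K : Set M} {e : M → E} {γ : ℝ → M} {x : M}
    {C T : ℝ} (hU : IsOpen U) (hK : IsCompact K) (hKU : K ⊆ U) (he : ContinuousOn e K)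
    (hγ : Continuous γ) (hγ0 : γ 0 = x) (hx : x ∈ U) (hC : 0 ≤ C)
    (hUK : U ∩ e ⁻¹' Metric.closedBall (e x) (C * T) ⊆ K)
    (hderiv : ∀ t, γ t ∈ K → ∃ y, HasDerivAt (e ∘ γ) y t ∧ ‖y‖ < C) :
    ∀ t ∈ Icc 0 T, γ t ∈ K ∧ dist (e (γ t)) (e x) ≤ C * t := by
  set s := {t | γ t ∈ U ∧ dist (e (γ t)) (e x) ≤ C * t}
  have hsK : ∀ t ∈ s ∩ Icc 0 T, γ t ∈ K := fun t ⟨⟨htU, htd⟩, ht⟩ =>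
    hUK ⟨htU, htd.trans (mul_le_mul_of_nonneg_left ht.2 hC)⟩
  -- Continuous induction: compactness of `K` makes the set of good times closed, and the speed
  -- bound `‖y‖ < C` pushes it to the right.
  have hsub : Icc 0 T ⊆ s := by
    refine IsClosed.Icc_subset_of_forall_mem_nhdsWithin ?_ ⟨hγ0 ▸ hx, by simp [hγ0]⟩ ?_
    · have hclosed : IsClosed {t ∈ γ ⁻¹' K ∩ Icc 0 T | dist (e (γ t)) (e x) ≤ C * t} :=
        ((hK.isClosed.preimage hγ).inter isClosed_Icc).isClosed_le
          (continuous_dist.comp_continuousOn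
            ((he.comp hγ.continuousOn fun t ht => ht.1).prodMk continuousOn_const))
          (continuousOn_const.mul continuousOn_id)
      convert hclosed using 1
      ext t
      exact ⟨fun ht => ⟨⟨hsK t ht, ht.2⟩, ht.1.2⟩, fun ⟨⟨htK, ht⟩, htd⟩ => ⟨⟨hKU htK, htd⟩, ht⟩⟩
    · intro t ht
      obtain ⟨y, hy, hyC⟩ := hderiv t (hsK t ⟨ht.1, Ico_subset_Icc_self ht.2⟩)
      have hU' : ∀ᶠ w in 𝓝 t, γ w ∈ U := hγ.continuousAt.preimage_mem_nhds (hU.mem_nhds ht.1.1)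
      filter_upwards [nhdsWithin_le_nhds (hU'.and (hy.eventually_norm_sub_le hyC)),
        self_mem_nhdsWithin] with w ⟨hwU, hw⟩ (htw : t < w)
      refine ⟨hwU, ?_⟩
      calc dist (e (γ w)) (e x) ≤ dist (e (γ w)) (e (γ t)) + dist (e (γ t)) (e x) :=
            dist_triangle _ _ _
        _ ≤ C * (w - t) + C * t := by
            rw [dist_eq_norm, ← abs_of_pos (sub_pos.2 htw)]
            exact add_le_add hw ht.1.2
        _ = C * w := by ring
  exact fun t ht => ⟨hsK t ⟨hsub ht, ht⟩, (hsub ht).2⟩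

section Charts

variable {E : Type*} [NormedAddCommGroup E] [NormedSpace ℝ E]
  {H : Type*} [TopologicalSpace H] {I : ModelWithCorners ℝ E H}
  {M : Type*} [TopologicalSpace M] [ChartedSpace H M]

theorem exists_pos_forall_dist_extChartAt_le_mem {K : Set M} {x₀ : M} (hK : K ∈ 𝓝 x₀) :
    ∃ r > 0, ∀ w ∈ (extChartAt I x₀).source,
      dist (extChartAt I x₀ w) (extChartAt I x₀ x₀) ≤ r → w ∈ K := by
  obtain ⟨ρ, hρ, hρK⟩ := Metric.mem_nhds_iff.mp (extChartAt_preimage_mem_nhds (I := I) hK)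
  refine ⟨ρ / 2, by positivity, fun w hw hdist => ?_⟩
  have hwK := hρK (lt_of_le_of_lt hdist (by linarith) : _ ∈ Metric.ball _ ρ)
  rwa [mem_preimage, (extChartAt I x₀).left_inv hw] at hwK

variable [IsManifold I 1 M] {γ : ℝ → M} {v : (x : M) → TangentSpace I x}

theorem IsMIntegralCurve.hasDerivAt_extChartAt (hγ : IsMIntegralCurve γ v) {x₀ : M} {t : ℝ}
    (hsrc : γ t ∈ (extChartAt I x₀).source) :
    HasDerivAt (extChartAt I x₀ ∘ γ) (tangentCoordChange I (γ t) x₀ (γ t) (v (γ t))) t := by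
  rw [extChartAt_source] at hsrc
  rw [hasDerivAt_iff_hasFDerivAt]
  apply hasMFDerivAt_iff_hasFDerivAt.mp
  apply (HasMFDerivAt.comp t (hasMFDerivAt_extChartAt (I := I) hsrc) (hγ t)).congr_mfderiv
  erw [mfderiv_chartAt_eq_tangentCoordChange hsrc]
  exact ContinuousLinearMap.ext fun a =>
    map_smul (tangentCoordChange I (γ t) x₀ (γ t)) (show ℝ from a) (v (γ t))

theorem IsMIntegralCurve.hasDerivAt_extChartAt_self (hγ : IsMIntegralCurve γ v) {x : M}
    (h0 : γ 0 = x) : HasDerivAt (extChartAt I x ∘ γ) (v x) 0 := by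
  subst h0
  have h := hγ.hasDerivAt_extChartAt (mem_extChartAt_source (I := I) (γ 0))
  erw [tangentCoordChange_self (mem_extChartAt_source (I := I) (γ 0))] at h
  exact h

theorem continuousOn_tangentCoordChange_extChartAt
    (hv : Continuous (fun x => (⟨x, v x⟩ : TangentBundle I M))) (x₀ : M) :
    ContinuousOn (fun z => tangentCoordChange I z x₀ z (v z)) (extChartAt I x₀).source := by
  rw [extChartAt_source]
  exact continuous_snd.comp_continuousOn <|
    (trivializationAt E (TangentSpace I) x₀).continuousOn.comp hv.continuousOn fun _ hz => hz

end Charts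

section Displacement

variable {E : Type*} [NormedAddCommGroup E] [NormedSpace ℝ E]
  {H : Type*} [TopologicalSpace H] {I : ModelWithCorners ℝ E H}
  {M : Type*} [MetricSpace M] [ChartedSpace H M] [IsManifold I 1 M]
  {Y : (x : M) → TangentSpace I x} {ψ : ℝ → M → M}

theorem eventually_forall_dist_integralCurve_lt [LocallyCompactSpace M]
    (hY : Continuous (fun x => (⟨x, Y x⟩ : TangentBundle I M))) (hψ0 : ∀ z, ψ 0 z = z)
    (hψY : ∀ z, IsMIntegralCurve (fun s => ψ s z) Y) {η : ℝ} (hη : 0 < η) (z₀ : M) :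
    ∀ᶠ p : ℝ × M in 𝓝 (0, z₀), ∀ s ∈ Icc 0 p.1, dist (ψ s p.2) p.2 < η := by
  set e := extChartAt I z₀
  set Yc := fun z => tangentCoordChange I z z₀ z (Y z)
  set C := ‖Yc z₀‖ + 1
  have hYc := continuousOn_tangentCoordChange_extChartAt hY z₀
  have hW : Metric.ball z₀ (η / 2) ∩ (e.source ∩ {z | ‖Yc z‖ < C}) ∈ 𝓝 z₀ :=
    inter_mem (Metric.ball_mem_nhds _ (by positivity)) <| inter_mem (extChartAt_source_mem_nhds z₀)
      ((hYc.continuousAt (extChartAt_source_mem_nhds z₀)).norm.eventually_lt continuousAt_const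
        (lt_add_one _))
  obtain ⟨K, hK, hKW, hKc⟩ := local_compact_nhds hW
  obtain ⟨R, hR, hmemK⟩ := exists_pos_forall_dist_extChartAt_le_mem (I := I) hK
  obtain ⟨r, hr, rfl⟩ : ∃ r > 0, R = 2 * r := ⟨R / 2, by positivity, by ring⟩
  have hV : e.source ∩ e ⁻¹' Metric.ball (e z₀) r ∈ 𝓝 z₀ :=
    inter_mem (extChartAt_source_mem_nhds z₀)
      ((continuousAt_extChartAt z₀).preimage_mem_nhds (Metric.ball_mem_nhds _ (by positivity)))
  filter_upwards [prod_mem_nhds (Iio_mem_nhds (show 0 < r / C by positivity)) hV]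
    with ⟨δ, z⟩ ⟨hδ, hzs, hzr⟩ s hs
  have hz : dist (e z) (e z₀) < r := hzr
  have hzK : z ∈ K := hmemK z hzs (by linarith)
  have hUK : e.source ∩ e ⁻¹' Metric.closedBall (e z) (C * (r / C)) ⊆ K := by
    rintro w ⟨hws, hwz⟩
    rw [mem_preimage, Metric.mem_closedBall, mul_div_cancel₀ _ (by positivity)] at hwz
    exact hmemK w hws (by linarith [dist_triangle (e w) (e z) (e z₀)])
  have hsK := (forall_mem_Icc_mem_and_dist_le_of_hasDerivAt (isOpen_extChartAt_source z₀) hKc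
    (fun w hw => (hKW hw).2.1) ((continuousOn_extChartAt z₀).mono fun w hw => (hKW hw).2.1)
    (hψY z).continuous (hψ0 z) hzs (by positivity) hUK
    (fun t ht => ⟨_, (hψY z).hasDerivAt_extChartAt (hKW ht).2.1, (hKW ht).2.2⟩)
    s ⟨hs.1, hs.2.trans hδ.le⟩).1
  calc dist (ψ s z) z ≤ dist (ψ s z) z₀ + dist z z₀ := dist_triangle_right _ _ _
    _ < η / 2 + η / 2 := add_lt_add (hKW hsK).1 (hKW hzK).1
    _ = η := by ring

theorem exists_pos_forall_dist_integralCurve_lt [CompactSpace M]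
    (hY : Continuous (fun x => (⟨x, Y x⟩ : TangentBundle I M))) (hψ0 : ∀ z, ψ 0 z = z)
    (hψY : ∀ z, IsMIntegralCurve (fun s => ψ s z) Y) {η : ℝ} (hη : 0 < η) :
    ∃ δ > 0, ∀ z, ∀ s ∈ Icc 0 δ, dist (ψ s z) z < η := by
  have h := isCompact_univ.eventually_forall_of_forall_eventually
    (P := fun δ z => ∀ s ∈ Icc 0 δ, dist (ψ s z) z < η) fun z₀ _ =>
    eventually_forall_dist_integralCurve_lt hY hψ0 hψY hη z₀
  obtain ⟨δ, hδ, hδ0⟩ :=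
    ((eventually_nhdsWithin_of_eventually_nhds h).and (self_mem_nhdsWithin (s := Ioi 0))).exists
  exact ⟨δ, hδ0, fun z => hδ z (mem_univ z)⟩

end Displacement

def coincidenceTimes {M : Type*} (φ ψ : ℝ → M → M) (x : M) : Set (ℝ × ℝ) :=
  {p | ψ p.1 x = φ p.2 x}

theorem sub_mem_coincidenceTimes {M : Type*} {φ ψ : ℝ → M → M} (hφ0 : ∀ x, φ 0 x = x)
    (hφadd : ∀ s t x, φ (s + t) x = φ s (φ t x)) (hψadd : ∀ s t x, ψ (s + t) x = ψ s (ψ t x))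
    (hcomm : ∀ s t x, ψ s (φ t x) = φ t (ψ s x)) {x : M} :
    ∀ p ∈ coincidenceTimes φ ψ x, ∀ q ∈ coincidenceTimes φ ψ x, p - q ∈ coincidenceTimes φ ψ x := by
  rintro ⟨a, b⟩ (hab : ψ a x = φ b x) ⟨c, d⟩ (hcd : ψ c x = φ d x)
  have hx : x = φ (-d) (ψ c x) := by rw [hcd, ← hφadd, neg_add_cancel, hφ0]
  show ψ (a - c) x = φ (b - d) x
  calc ψ (a - c) x = ψ (a - c) (φ (-d) (ψ c x)) := by rw [← hx]
    _ = φ (-d) (ψ a x) := by rw [hcomm, ← hψadd, sub_add_cancel]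
    _ = φ (b - d) x := by rw [hab, ← hφadd, neg_add_eq_sub]

theorem stmt_3_general
    {E : Type*} [NormedAddCommGroup E] [NormedSpace ℝ E]
    {H : Type*} [TopologicalSpace H] {I : ModelWithCorners ℝ E H}
    {M : Type*} [MetricSpace M] [ChartedSpace H M] [IsManifold I (⊤ : ℕ∞) M]
    [CompactSpace M]
    (X : (x : M) → TangentSpace I x)
    (φ : ℝ → M → M)
    (hφ0 : ∀ x, φ 0 x = x)
    (hφadd : ∀ s t x, φ (s + t) x = φ s (φ t x))
    (hφX : ∀ x t, HasMFDerivAt 𝓘(ℝ, ℝ) I (fun s => φ s x) t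
      ((1 : ℝ →L[ℝ] ℝ).smulRight (X (φ t x))))
    (hsep : ∃ ε > (0 : ℝ), ∀ x y : M,
      (∀ t : ℝ, dist (φ t x) (φ t y) < ε) → ∃ s : ℝ, y = φ s x) :
    ∀ (Y : (x : M) → TangentSpace I x),
      ContMDiff I I.tangent 1 (fun x => (⟨x, Y x⟩ : TangentBundle I M)) →
      ∀ ψ : ℝ → M → M,
        (∀ x, ψ 0 x = x) →
        (∀ s t x, ψ (s + t) x = ψ s (ψ t x)) →
        (∀ x t, HasMFDerivAt 𝓘(ℝ, ℝ) I (fun s => ψ s x) t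
          ((1 : ℝ →L[ℝ] ℝ).smulRight (Y (ψ t x)))) →
        (∀ s t x, ψ s (φ t x) = φ t (ψ s x)) →
        ∀ x : M,
          Module.finrank ℝ (Submodule.span ℝ ({X x, Y x} : Set (TangentSpace I x))) ≤ 1 := by
  intro Y hY ψ hψ0 hψadd hψY hcomm x
  obtain ⟨ε, hε, hsep⟩ := hsep
  obtain ⟨δ, hδ, hsmall⟩ := exists_pos_forall_dist_integralCurve_lt hY.continuous hψ0 hψY hε
  have hproj : Icc 0 δ ⊆ Prod.fst '' coincidenceTimes φ ψ x := fun s hs => by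
    obtain ⟨τ, hτ⟩ := hsep x (ψ s x) fun t => by
      rw [← hcomm, dist_comm]
      exact hsmall _ s hs
    exact ⟨(s, τ), hτ, rfl⟩
  have hacc : AccPt 0 (𝓟 (coincidenceTimes φ ψ x)) :=
    accPt_zero_of_sub_mem_of_not_countable (sub_mem_coincidenceTimes hφ0 hφadd hψadd hcomm)
      fun hc => (Cardinal.Real.Icc_countable_iff.1 ((hc.image _).mono hproj)).not_gt hδ
  have hF := IsMIntegralCurve.hasDerivAt_extChartAt_self (hψY x) (hψ0 x)
  have hG := IsMIntegralCurve.hasDerivAt_extChartAt_self (hφX x) (hφ0 x)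
  have hdiff := (HasFDerivAt.comp (f := Prod.fst) (0 : ℝ × ℝ) hF.hasFDerivAt hasFDerivAt_fst).sub
    (HasFDerivAt.comp (f := Prod.snd) (0 : ℝ × ℝ) hG.hasFDerivAt hasFDerivAt_snd)
  obtain ⟨⟨a, b⟩, hab, hker⟩ := hdiff.exists_ne_zero_apply_eq_zero_of_accPt
    (fun p (hp : ψ p.1 x = φ p.2 x) => by simp [hp, hψ0, hφ0]) hacc
  simp only [sub_apply, ContinuousLinearMap.comp_apply,
    ContinuousLinearMap.coe_fst', ContinuousLinearMap.coe_snd', sub_eq_zero] at hker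
  exact finrank_span_pair_le_one (by simpa [Prod.ext_iff, and_comm] using hab) hker.symm

/-- A separating `C¹` vector field on a compact manifold has collinear
`C¹`-centralizer: for every `C¹` vector field `Y` commuting with `X` (their flows commute),
`span(X x, Y x)` has dimension at most `1` at every point. -/
theorem stmt_3
    {E : Type*} [NormedAddCommGroup E] [NormedSpace ℝ E] [FiniteDimensional ℝ E]
    {H : Type*} [TopologicalSpace H] {I : ModelWithCorners ℝ E H}
    {M : Type*} [MetricSpace M] [ChartedSpace H M] [IsManifold I (⊤ : ℕ∞) M]
    [CompactSpace M]
    (X : (x : M) → TangentSpace I x)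
    (hX : ContMDiff I I.tangent 1 (fun x => (⟨x, X x⟩ : TangentBundle I M)))
    (φ : ℝ → M → M)
    (hφ0 : ∀ x, φ 0 x = x)
    (hφadd : ∀ s t x, φ (s + t) x = φ s (φ t x))
    (hφX : ∀ x t, HasMFDerivAt 𝓘(ℝ, ℝ) I (fun s => φ s x) t
      ((1 : ℝ →L[ℝ] ℝ).smulRight (X (φ t x))))
    (hsep : ∃ ε > (0 : ℝ), ∀ x y : M,
      (∀ t : ℝ, dist (φ t x) (φ t y) < ε) → ∃ s : ℝ, y = φ s x) :
    ∀ (Y : (x : M) → TangentSpace I x),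
      ContMDiff I I.tangent 1 (fun x => (⟨x, Y x⟩ : TangentBundle I M)) →
      ∀ ψ : ℝ → M → M,
        (∀ x, ψ 0 x = x) →
        (∀ s t x, ψ (s + t) x = ψ s (ψ t x)) →
        (∀ x t, HasMFDerivAt 𝓘(ℝ, ℝ) I (fun s => ψ s x) t
          ((1 : ℝ →L[ℝ] ℝ).smulRight (Y (ψ t x)))) →
        (∀ s t x, ψ s (φ t x) = φ t (ψ s x)) →
        ∀ x : M,
          Module.finrank ℝ (Submodule.span ℝ ({X x, Y x} : Set (TangentSpace I x))) ≤ 1 :=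
  stmt_3_general X φ hφ0 hφadd hφX hsep
end

section
/- Let M be a compact connected manifold and X a C¹ vector field admitting a countable spectral decomposition, i.e. the non-wandering set Ω(X) is a disjoint countable union of pairwise disjoint compact, invariant, transitive sets Λ_i. Then every continuous X-invariant function f : M → ℝ is constant. -/
open Filter Topology Set

/-- If the non-wandering set of a flow on a compact connected manifold is a
countable disjoint union of compact invariant transitive sets (a countable spectral
decomposition), then every continuous invariant function is constant. -/
theorem stmt_5 {M : Type*} [TopologicalSpace M] [CompactSpace M] [ConnectedSpace M]
    (φ : Flow ℝ M) (Λ : ℕ → Set M)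
    (hdisj : ∀ i j, i ≠ j → Disjoint (Λ i) (Λ j))
    (hcomp : ∀ i, IsCompact (Λ i))
    (hinv : ∀ i (t : ℝ), φ t '' Λ i ⊆ Λ i)
    (htrans : ∀ i, ∃ x ∈ Λ i, Λ i ⊆ closure (Set.range fun t : ℝ => φ t x))
    (hspec : {x : M | ∀ U ∈ 𝓝 x, ∀ T : ℝ, 0 < T →
        ∃ t : ℝ, T < t ∧ (U ∩ φ t '' U).Nonempty} = ⋃ i, Λ i)
    (f : M → ℝ) (hf : Continuous f) (hfi : ∀ (t : ℝ) (x : M), f (φ t x) = f x) :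
    ∀ x y : M, f x = f y := by
  classical
  -- f is constant on the closure of any orbit
  have horb : ∀ x z : M, z ∈ closure (Set.range fun t : ℝ => φ t x) → f z = f x := by
    intro x z hz
    have hcl : IsClosed (f ⁻¹' {f x}) := isClosed_singleton.preimage hf
    have hsub : (Set.range fun t : ℝ => φ t x) ⊆ f ⁻¹' {f x} := by
      rintro _ ⟨t, rfl⟩
      simp [hfi]
    have := (closure_minimal hsub hcl) hz
    simpa using this
  -- f is constant on each Λ i
  have hconst : ∀ i, ∀ y ∈ Λ i, ∀ z ∈ Λ i, f y = f z := by
    intro i y hy z hz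
    obtain ⟨x₀, _, hd⟩ := htrans i
    rw [horb x₀ y (hd hy), horb x₀ z (hd hz)]
  -- each point's value is attained on some Λ i
  have hkey : ∀ x : M, ∃ i, ∃ w ∈ Λ i, f x = f w := by
    intro x
    obtain ⟨z, hz⟩ := nonempty_omegaLimit atTop (fun t : ℝ => φ t) {x} (singleton_nonempty x)
    -- frequently the orbit visits any neighborhood of z
    have hω : ∀ n ∈ 𝓝 z, ∃ᶠ t in (atTop : Filter ℝ), φ t x ∈ n := by
      intro n hn
      have := (mem_omegaLimit_iff_frequently atTop (fun t : ℝ => φ t) {x} z).mp hz n hn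
      refine this.mono ?_
      rintro t ⟨w, hw1, hw2⟩
      rw [Set.mem_singleton_iff] at hw1
      subst hw1
      exact hw2
    -- f z = f x
    have hzcl : z ∈ closure (Set.range fun t : ℝ => φ t x) := by
      have h1 : z ∈ closure (Set.image2 (fun (t : ℝ) (x : M) => φ t x) Set.univ {x}) := by
        rw [omegaLimit_def] at hz
        exact Set.mem_iInter₂.mp hz Set.univ univ_mem
      refine closure_mono ?_ h1
      rintro _ ⟨t, _, y, rfl, rfl⟩
      exact ⟨t, rfl⟩
    have hfz : f z = f x := horb x z hzcl
    -- z is nonwandering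
    have hzΩ : z ∈ ⋃ i, Λ i := by
      rw [← hspec]
      intro U hU T hT
      obtain ⟨t₁, ht₁⟩ := (hω U hU).exists
      obtain ⟨t₂, ht₂, ht₂ge⟩ := ((hω U hU).and_eventually (eventually_ge_atTop (t₁ + T + 1))).exists
      refine ⟨t₂ - t₁, by linarith, ⟨φ t₂ x, ht₂, φ t₁ x, ht₁, ?_⟩⟩
      rw [← φ.map_add]
      ring_nf
    obtain ⟨s, ⟨i, rfl⟩, hzi⟩ := hzΩ
    exact ⟨i, z, hzi, hfz.symm⟩
  -- hence the range of f is countable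
  set c : ℕ → ℝ := fun i => if h : (Λ i).Nonempty then f h.some else 0 with hc
  have hrange : Set.range f ⊆ Set.range c := by
    rintro _ ⟨x, rfl⟩
    obtain ⟨i, w, hw, hfw⟩ := hkey x
    refine ⟨i, ?_⟩
    have hne : (Λ i).Nonempty := ⟨w, hw⟩
    rw [hc]
    simp only [hne, dif_pos]
    rw [hconst i hne.some hne.some_mem w hw, hfw]
  have hcount : (Set.range f).Countable := (Set.countable_range c).mono hrange
  -- if f were nonconstant, range f would contain an uncountable interval
  have main : ∀ a b : M, f a < f b → False := by
    intro a b hab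
    have hconn : IsPreconnected (Set.range f) := by
      rw [← Set.image_univ]
      exact (isPreconnected_univ).image f hf.continuousOn
    have hIcc : Set.Icc (f a) (f b) ⊆ Set.range f :=
      hconn.ordConnected.out ⟨a, rfl⟩ ⟨b, rfl⟩
    have h1 : (Set.Icc (f a) (f b)).Countable := hcount.mono hIcc
    have h2 := h1.to_subtype
    have h3 := Cardinal.mk_le_aleph0 (α := Set.Icc (f a) (f b))
    rw [Cardinal.mk_Icc_real hab] at h3
    exact absurd h3 Cardinal.aleph0_lt_continuum.not_ge
  intro x y
  rcases lt_trichotomy (f x) (f y) with h | h | h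
  · exact absurd h (fun h => main x y h)
  · exact h
  · exact absurd h (fun h => main y x h)
end

section
/- Let X be a non-singular C² vector field on the 2-torus 𝕋² whose flow is the suspension of a circle diffeomorphism f : S¹ → S¹ in which every orbit is periodic (f = id), with continuous return time function τ : S¹ → (0,∞) giving the period of each orbit. If τ is non-constant, then X is not separating: for every ε > 0 there exist points x₁ ≠ x₂ on distinct orbits with d(X_t(x₁), X_t(x₂)) ≤ ε for all t ∈ ℝ. -/
open Filter Topology Set

/-!
Let `θ₀` be a maximum point of the period function `τ`. A continuous injective function on an
interval is strictly monotone, so it has no maximum inside; hence there are two distinct orbits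
through points `θ₁ ≠ θ₂` arbitrarily close to `θ₀` with the same period `c ≤ τ θ₀`. By
continuity of the flow, uniformly on the compact time interval `[0, τ θ₀]`, these two orbits
stay close during one period, hence forever by periodicity.
-/

theorem not_injOn_Icc_of_isMaxOn {α δ : Type*} [ConditionallyCompleteLinearOrder α]
    [DenselyOrdered α] [TopologicalSpace α] [OrderTopology α] [LinearOrder δ]
    [TopologicalSpace δ] [OrderClosedTopology δ] {f : α → δ} {a b c : α}
    (hac : a < c) (hcb : c < b) (hf : ContinuousOn f (Icc a b)) (hmax : IsMaxOn f (Icc a b) c) :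
    ¬ InjOn f (Icc a b) := by
  intro hinj
  have hab : a ≤ b := (hac.trans hcb).le
  have hc : c ∈ Icc a b := ⟨hac.le, hcb.le⟩
  rcases hf.strictMonoOn_of_injOn_Icc' hab hinj with hmono | hanti
  · exact (hmono hc (right_mem_Icc.mpr hab) hcb).not_ge (hmax (right_mem_Icc.mpr hab))
  · exact (hanti (left_mem_Icc.mpr hab) hc hac).not_ge (hmax (left_mem_Icc.mpr hab))

theorem AddCircle.exists_ne_apply_eq_of_isMaxOn {p : ℝ} [Fact (0 < p)] {f : AddCircle p → ℝ}
    (hf : Continuous f) {θ₀ : AddCircle p} (hmax : IsMaxOn f univ θ₀) {U : Set (AddCircle p)}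
    (hU : U ∈ 𝓝 θ₀) : ∃ θ₁ ∈ U, ∃ θ₂ ∈ U, θ₁ ≠ θ₂ ∧ f θ₁ = f θ₂ := by
  obtain ⟨a₀, rfl⟩ := QuotientAddGroup.mk_surjective θ₀
  have hp : 0 < p := Fact.out
  have hcoe : Continuous ((↑) : ℝ → AddCircle p) := AddCircle.continuous_mk' p
  obtain ⟨r, hr, hball⟩ :=
    Metric.nhds_basis_closedBall.mem_iff.mp (hcoe.continuousAt.preimage_mem_nhds hU)
  set δ := min r (p / 4)
  have hδ : 0 < δ := lt_min hr (by positivity)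
  have hδp : δ ≤ p / 4 := min_le_right _ _
  have hsub : Icc (a₀ - δ) (a₀ + δ) ⊆ (↑) ⁻¹' U := by
    rw [← Real.closedBall_eq_Icc]
    exact (Metric.closedBall_subset_closedBall (min_le_left _ _)).trans hball
  have hinj : InjOn ((↑) : ℝ → AddCircle p) (Icc (a₀ - δ) (a₀ + δ)) := fun x hx y hy hxy =>
    (AddCircle.coe_eq_coe_iff_of_mem_Ico (a := a₀ - p / 2)
      ⟨by linarith [hx.1], by linarith [hx.2]⟩ ⟨by linarith [hy.1], by linarith [hy.2]⟩).mp hxy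
  have hnot := not_injOn_Icc_of_isMaxOn (f := f ∘ (↑)) (a := a₀ - δ) (b := a₀ + δ) (c := a₀) (by linarith) (by linarith)
    (hf.comp hcoe).continuousOn fun x _ => hmax (mem_univ (x : AddCircle p))
  simp only [InjOn, not_forall] at hnot
  obtain ⟨x, hx, y, hy, hfxy, hxy⟩ := hnot
  exact ⟨x, hsub hx, y, hsub hy, fun h => hxy (hinj hx hy h), hfxy⟩

namespace Flow

theorem eventually_forall_dist_map_lt {τ M : Type*} [TopologicalSpace τ] [AddMonoid τ]
    [ContinuousAdd τ] [PseudoMetricSpace M] (φ : Flow τ M) (x₀ : M) {K : Set τ}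
    (hK : IsCompact K) {ε : ℝ} (hε : 0 < ε) :
    ∀ᶠ x in 𝓝 x₀, ∀ t ∈ K, dist (φ t x) (φ t x₀) < ε := by
  obtain ⟨v, hv, hvK⟩ := hK.mem_uniformity_of_prod (f := fun x t => φ t x) (q := x₀)
    (φ.continuous continuous_snd continuous_fst).continuousOn (mem_univ _)
    (Metric.dist_mem_uniformity hε)
  rw [nhdsWithin_univ] at hv
  exact mem_of_superset hv hvK

theorem dist_map_le_of_forall_mem_Ico {M : Type*} [PseudoMetricSpace M] (φ : Flow ℝ M)
    {c ε : ℝ} {x₁ x₂ : M} (hc : 0 < c) (h₁ : φ c x₁ = x₁) (h₂ : φ c x₂ = x₂)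
    (h : ∀ t ∈ Ico 0 c, dist (φ t x₁) (φ t x₂) ≤ ε) (t : ℝ) :
    dist (φ t x₁) (φ t x₂) ≤ ε := by
  have hper : Function.Periodic (fun t => dist (φ t x₁) (φ t x₂)) c := fun t => by
    simp only [φ.map_add, h₁, h₂]
  obtain ⟨t', ht', heq⟩ := hper.exists_mem_Ico₀ hc t
  exact heq ▸ h t' ht'

end Flow

theorem stmt_13_general {M : Type*} [MetricSpace M]
    (φ : Flow ℝ M)
    (ι : AddCircle (1 : ℝ) → M) (hι : Continuous ι)
    (τ : AddCircle (1 : ℝ) → ℝ) (hτ : Continuous τ) (hτpos : ∀ θ, 0 < τ θ)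
    (hper : ∀ θ, φ (τ θ) (ι θ) = ι θ)
    (honce : ∀ θ θ' (t : ℝ), φ t (ι θ) = ι θ' → θ = θ') :
    ∀ ε : ℝ, 0 < ε → ∃ x₁ x₂ : M, x₁ ≠ x₂ ∧ (∀ s : ℝ, φ s x₁ ≠ x₂) ∧
      ∀ t : ℝ, dist (φ t x₁) (φ t x₂) ≤ ε := by
  intro ε hε
  obtain ⟨θ₀, -, hmax⟩ := isCompact_univ.exists_isMaxOn univ_nonempty hτ.continuousOn
  have hnear := φ.eventually_forall_dist_map_lt (ι θ₀) (isCompact_Icc (a := 0) (b := τ θ₀))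
    (half_pos hε)
  obtain ⟨θ₁, h₁, θ₂, h₂, hne, hτeq⟩ :=
    AddCircle.exists_ne_apply_eq_of_isMaxOn hτ hmax (hι.continuousAt.preimage_mem_nhds hnear)
  have hdistinct : ∀ s, φ s (ι θ₁) ≠ ι θ₂ := fun s hs => hne (honce θ₁ θ₂ s hs)
  refine ⟨ι θ₁, ι θ₂, fun h => hdistinct 0 (by rwa [φ.map_zero_apply]), hdistinct, ?_⟩
  refine φ.dist_map_le_of_forall_mem_Ico (hτpos θ₁) (hper θ₁) (by rw [hτeq]; exact hper θ₂)
    fun t ht => ?_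
  have ht' : t ∈ Icc 0 (τ θ₀) := ⟨ht.1, ht.2.le.trans (hmax (mem_univ θ₁))⟩
  calc dist (φ t (ι θ₁)) (φ t (ι θ₂))
      ≤ dist (φ t (ι θ₁)) (φ t (ι θ₀)) + dist (φ t (ι θ₂)) (φ t (ι θ₀)) :=
        dist_triangle_right _ _ _
    _ ≤ ε := by linarith [h₁ t ht', h₂ t ht']

/-- A (suspension) flow on a compact metric space in which every orbit crosses
a circle cross-section exactly once and is periodic with period `τ(θ)`, `τ` continuous: if `τ` is
non-constant then the flow is not separating — for every `ε > 0` there are points on distinct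
orbits staying `ε`-close for all time. -/
theorem stmt_13 {M : Type*} [MetricSpace M] [CompactSpace M]
    (φ : Flow ℝ M)
    (ι : AddCircle (1 : ℝ) → M) (hι : Continuous ι) (hιinj : Function.Injective ι)
    (τ : AddCircle (1 : ℝ) → ℝ) (hτ : Continuous τ) (hτpos : ∀ θ, 0 < τ θ)
    (hper : ∀ θ, φ (τ θ) (ι θ) = ι θ)
    (hmin : ∀ θ (t : ℝ), 0 < t → t < τ θ → φ t (ι θ) ≠ ι θ)
    (honce : ∀ θ θ' (t : ℝ), φ t (ι θ) = ι θ' → θ = θ')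
    (hcover : ∀ x : M, ∃ (θ : AddCircle (1 : ℝ)) (t : ℝ), φ t (ι θ) = x)
    (hτnc : ∃ θ θ', τ θ ≠ τ θ') :
    ∀ ε : ℝ, 0 < ε → ∃ x₁ x₂ : M, x₁ ≠ x₂ ∧ (∀ s : ℝ, φ s x₁ ≠ x₂) ∧
      ∀ t : ℝ, dist (φ t x₁) (φ t x₂) ≤ ε :=
  stmt_13_general φ ι hι τ hτ hτpos hper honce
end

section
/- Let f : S¹ → S¹ be an orientation-preserving circle homeomorphism topologically conjugate to an irrational rotation of angle θ, with unique invariant probability measure μ, and let τ : S¹ → (0,∞) be continuous with T := ∫ τ dμ. Suppose the Birkhoff sums along denominators q_n of the continued fraction convergents p_n/q_n of θ satisfy sup_{x∈S¹} |Σ_{l=0}^{q_n−1} τ(f^l(x)) − T q_n| → 0 as n → ∞ (Denjoy–Koksma type estimate). Then the suspension flow of f with roof function τ is not kinematic expansive. -/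
/-!
Fix a point `θ` and let `Q = q n`. Since `f` is conjugate to the rotation by `α` and
`‖Q • α‖ < 1 / Q`, the iterate `f^[Q]` is uniformly close to the identity, and by the
Denjoy–Koksma estimate the Birkhoff sum `S_Q τ` hardly depends on the point. Writing a point of
the orbit of `ι θ` as `φ u (ι θ')` with `0 ≤ u < τ θ'`, the same time `t` carries
`ι (f^[Q] θ) = φ (S_Q τ θ) (ι θ)` to `φ (u + S_Q τ θ - S_Q τ θ') (ι (f^[Q] θ'))`, so the two orbits
stay close for all time. Kinematic expansiveness at scale `ε = min τ` then gives
`ι (f^[Q] θ) = φ s (ι θ)` with `|s| < min τ ≤ S_Q τ θ`, so `ι θ` is a periodic point of the flow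
and `θ` one of `f`, which is impossible for a map conjugate to an irrational rotation.
-/

open Filter Topology Set MeasureTheory

theorem Function.Semiconj.exists_pos_forall_dist_iterate_lt {X G : Type*} [MetricSpace X]
    [SeminormedAddCommGroup G] [CompactSpace G] {f : X → X} {h : X ≃ₜ G} {a : G}
    (hconj : Function.Semiconj h f (a + ·)) {η : ℝ} (hη : 0 < η) :
    ∃ η' > 0, ∀ k : ℕ, ‖k • a‖ < η' → ∀ x, dist (f^[k] x) x < η := by
  obtain ⟨η', hη', hUC⟩ := Metric.uniformContinuous_iff.1
    (CompactSpace.uniformContinuous_of_continuous h.symm.continuous) η hη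
  refine ⟨η', hη', fun k hk x => ?_⟩
  have hdist : dist (h (f^[k] x)) (h x) < η' := by
    rwa [(hconj.iterate_right k).eq, add_left_iterate, dist_eq_norm, add_sub_cancel_right]
  simpa using hUC hdist

theorem Function.Semiconj.not_isPeriodicPt {X G : Type*} [AddGroup G] {f : X → X} {h : X → G}
    {a : G} (hconj : Function.Semiconj h f (a + ·)) (ha : ¬IsOfFinAddOrder a)
    {k : ℕ} (hk : 0 < k) (x : X) : ¬ Function.IsPeriodicPt f k x := by
  intro hx
  refine ha (isOfFinAddOrder_iff_nsmul_eq_zero.2 ⟨k, hk, ?_⟩)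
  have := congrArg h hx.eq
  rwa [(hconj.iterate_right k).eq, add_left_iterate, add_eq_right] at this

theorem eventually_forall_abs_sub_lt_of_tendsto_iSup {X : Type*} [TopologicalSpace X]
    [CompactSpace X] {g : ℕ → X → ℝ} (hg : ∀ n, Continuous (g n)) {c : ℕ → ℝ}
    (hlim : Tendsto (fun n => ⨆ x, |g n x - c n|) atTop (𝓝 0)) {η : ℝ} (hη : 0 < η) :
    ∀ᶠ n in atTop, ∀ x y, |g n x - g n y| < η := by
  filter_upwards [hlim.eventually_lt_const (half_pos hη)] with n hn x y
  have hle : ∀ z, |g n z - c n| ≤ ⨆ x, |g n x - c n| := fun z =>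
    le_ciSup (isCompact_range (((hg n).sub continuous_const).abs)).bddAbove z
  calc |g n x - g n y| = |(g n x - c n) - (g n y - c n)| := by ring_nf
    _ ≤ |g n x - c n| + |g n y - c n| := abs_sub _ _
    _ < η / 2 + η / 2 := add_lt_add ((hle x).trans_lt hn) ((hle y).trans_lt hn)
    _ = η := add_halves η

theorem AddCircle.norm_nsmul_coe_lt {α : ℝ} {p : ℤ} {q : ℕ} (hq : 0 < q)
    (h : |α - p / q| < 1 / (q : ℝ) ^ 2) : ‖q • (α : AddCircle (1 : ℝ))‖ < 1 / q := by
  have hq' : (0 : ℝ) < q := by exact_mod_cast hq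
  have hp : ((p : ℝ) : AddCircle (1 : ℝ)) = 0 := (AddCircle.coe_eq_zero_iff 1).2 ⟨p, by simp⟩
  have hcoe : q • (α : AddCircle (1 : ℝ)) = ((q * α - p : ℝ) : AddCircle (1 : ℝ)) := by
    rw [AddCircle.coe_sub, hp, sub_zero, ← nsmul_eq_mul, AddCircle.coe_nsmul]
  calc ‖q • (α : AddCircle (1 : ℝ))‖ ≤ |q * α - p| := by
        rw [hcoe]; exact QuotientAddGroup.norm_mk_le_norm
    _ = q * |α - p / q| := by
        rw [← abs_of_pos hq', ← abs_mul, abs_of_pos hq', mul_sub, mul_div_cancel₀ _ hq'.ne']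
    _ < q * (1 / (q : ℝ) ^ 2) := mul_lt_mul_of_pos_left h hq'
    _ = 1 / q := by field_simp

theorem AddCircle.tendsto_norm_nsmul_coe {α : ℝ} {p : ℕ → ℤ} {q : ℕ → ℕ} (hq : ∀ n, 0 < q n)
    (hqlim : Tendsto q atTop atTop) (h : ∀ n, |α - p n / q n| < 1 / (q n : ℝ) ^ 2) :
    Tendsto (fun n => ‖q n • (α : AddCircle (1 : ℝ))‖) atTop (𝓝 0) :=
  squeeze_zero (fun _ => norm_nonneg _) (fun n => (norm_nsmul_coe_lt (hq n) (h n)).le)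
    (tendsto_one_div_atTop_nhds_zero_nat.comp hqlim)

namespace Flow

variable {M X : Type*}

section

variable [TopologicalSpace M] (φ : Flow ℝ M) {ι : X → M} {f : X → X} {τ : X → ℝ}

theorem apply_birkhoffSum_eq (hret : ∀ θ, φ (τ θ) (ι θ) = ι (f θ)) (k : ℕ) (θ : X) :
    φ (birkhoffSum f τ k θ) (ι θ) = ι (f^[k] θ) := by
  induction k generalizing θ with
  | zero => simp [birkhoffSum_zero, φ.map_zero_apply]
  | succ k ih =>
    rw [birkhoffSum_succ', add_comm, φ.map_add, hret, ih, Function.iterate_succ_apply]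

theorem exists_mem_Ico_apply_eq (hret : ∀ θ, φ (τ θ) (ι θ) = ι (f θ))
    (hf : f.Surjective) {m : ℝ} (hm0 : 0 < m) (hm : ∀ θ, m ≤ τ θ) (θ : X) (t : ℝ) :
    ∃ θ' u, u ∈ Ico 0 (τ θ') ∧ φ t (ι θ) = φ u (ι θ') := by
  -- each return forward or backward along the orbit changes `t` by at least `m`
  suffices key : ∀ n : ℕ, ∀ θ t, |t| < n * m →
      ∃ θ' u, u ∈ Ico 0 (τ θ') ∧ φ t (ι θ) = φ u (ι θ') by
    obtain ⟨n, hn⟩ := exists_nat_gt (|t| / m)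
    exact key n θ t (by rwa [div_lt_iff₀ hm0] at hn)
  intro n
  induction n with
  | zero =>
    intro θ t ht
    rw [Nat.cast_zero, zero_mul] at ht
    exact absurd ht (abs_nonneg t).not_gt
  | succ n ih =>
    intro θ t ht
    rcases lt_or_ge t 0 with htneg | htnonneg
    · obtain ⟨θ₀, rfl⟩ := hf θ
      have hback : φ t (ι (f θ₀)) = φ (t + τ θ₀) (ι θ₀) := by rw [φ.map_add, hret]
      rcases lt_or_ge (t + τ θ₀) 0 with h | h
      · rw [hback]
        refine ih θ₀ _ ?_
        rw [abs_of_neg h]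
        rw [abs_of_neg htneg] at ht
        push_cast at ht
        linarith [hm θ₀]
      · exact ⟨θ₀, _, ⟨h, by linarith⟩, hback⟩
    · rcases lt_or_ge t (τ θ) with h | h
      · exact ⟨θ, t, ⟨htnonneg, h⟩, rfl⟩
      · have hfwd : φ t (ι θ) = φ (t - τ θ) (ι (f θ)) := by
          rw [← hret, ← φ.map_add, sub_add_cancel]
        rw [hfwd]
        refine ih (f θ) _ ?_
        rw [abs_of_nonneg (by linarith)]
        rw [abs_of_nonneg htnonneg] at ht
        push_cast at ht
        linarith [hm θ]

theorem exists_iterate_eq_of_apply_eq (hret : ∀ θ, φ (τ θ) (ι θ) = ι (f θ))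
    (hmin : ∀ θ (t : ℝ), 0 < t → t < τ θ → φ t (ι θ) ∉ range ι) (hι : ι.Injective)
    {m : ℝ} (hm0 : 0 < m) (hm : ∀ θ, m ≤ τ θ) {θ θ' : X} {c : ℝ} (hc : 0 < c)
    (h : φ c (ι θ) = ι θ') : ∃ k, 0 < k ∧ f^[k] θ = θ' := by
  obtain ⟨n, hn⟩ := exists_nat_gt (c / m)
  rw [div_lt_iff₀ hm0] at hn
  induction n generalizing θ c with
  | zero => rw [Nat.cast_zero, zero_mul] at hn; linarith
  | succ n ih =>
    rcases lt_trichotomy c (τ θ) with hlt | heq | hgt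
    · exact absurd ⟨θ', h.symm⟩ (hmin θ c hc hlt)
    · refine ⟨1, one_pos, hι ?_⟩
      rw [← h, heq, hret, Function.iterate_one]
    · have hfwd : φ (c - τ θ) (ι (f θ)) = ι θ' := by
        rw [← hret, ← φ.map_add, sub_add_cancel, h]
      push_cast at hn
      obtain ⟨k, -, hk⟩ := ih (sub_pos.2 hgt) hfwd (by linarith [hm θ])
      exact ⟨k + 1, k.succ_pos, by rwa [Function.iterate_succ_apply]⟩

end

variable [MetricSpace M] [MetricSpace X] (φ : Flow ℝ M) {ι : X → M} {f : X → X} {τ : X → ℝ}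

theorem exists_pos_forall_dist_apply_lt [CompactSpace X] (hι : Continuous ι) (R : ℝ)
    {δ : ℝ} (hδ : 0 < δ) :
    ∃ η > 0, ∀ u θ u' θ', u ∈ Icc 0 R → |u' - u| < η → dist θ' θ < η →
      dist (φ u (ι θ)) (φ u' (ι θ')) < δ := by
  have hK : IsCompact (Icc (-1) (R + 1) ×ˢ (univ : Set X)) := isCompact_Icc.prod isCompact_univ
  obtain ⟨η, hη, hUC⟩ := Metric.uniformContinuousOn_iff.1 (hK.uniformContinuousOn_of_continuous
    (φ.continuous continuous_fst (hι.comp continuous_snd)).continuousOn) δ hδ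
  refine ⟨min η 1, lt_min hη one_pos, fun u θ u' θ' hu hu' hθ => ?_⟩
  have hu'1 := abs_lt.1 (hu'.trans_le (min_le_right _ _))
  refine hUC (u, θ) ⟨⟨by linarith [hu.1], by linarith [hu.2]⟩, trivial⟩ (u', θ')
    ⟨⟨by linarith [hu.1], by linarith [hu.2]⟩, trivial⟩ ?_
  rw [Prod.dist_eq, Real.dist_eq, abs_sub_comm, dist_comm]
  exact max_lt (hu'.trans_le (min_le_left _ _)) (hθ.trans_le (min_le_left _ _))

theorem dist_apply_apply_iterate_lt (hret : ∀ θ, φ (τ θ) (ι θ) = ι (f θ)) (hf : f.Surjective)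
    {m : ℝ} (hm0 : 0 < m) (hm : ∀ θ, m ≤ τ θ) {R : ℝ} (hR : ∀ θ, τ θ ≤ R) {δ η : ℝ} {Q : ℕ}
    (hchart : ∀ u θ u' θ', u ∈ Icc 0 R → |u' - u| < η → dist θ' θ < η →
      dist (φ u (ι θ)) (φ u' (ι θ')) < δ)
    (hQ : ∀ x, dist (f^[Q] x) x < η)
    (hS : ∀ x y, |birkhoffSum f τ Q x - birkhoffSum f τ Q y| < η) (θ : X) (t : ℝ) :
    dist (φ t (ι θ)) (φ t (ι (f^[Q] θ))) < δ := by
  obtain ⟨θ', u, ⟨hu0, huτ⟩, ht⟩ := φ.exists_mem_Ico_apply_eq hret hf hm0 hm θ t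
  have hshift : φ t (ι (f^[Q] θ)) =
      φ (u + (birkhoffSum f τ Q θ - birkhoffSum f τ Q θ')) (ι (f^[Q] θ')) := by
    rw [← φ.apply_birkhoffSum_eq hret, ← φ.apply_birkhoffSum_eq hret, ← φ.map_add, ← φ.map_add,
      add_comm t, φ.map_add, ht, ← φ.map_add]
    congr 1
    ring
  rw [ht, hshift]
  exact hchart u θ' _ _ ⟨hu0, huτ.le.trans (hR θ')⟩ (by simpa using hS θ θ') (hQ θ')

end Flow

theorem stmt_14_general {M : Type*} [MetricSpace M]
    (φ : Flow ℝ M)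
    (f : AddCircle (1 : ℝ) ≃ₜ AddCircle (1 : ℝ))
    (α : ℝ) (hα : Irrational α)
    (hconj : ∃ h : AddCircle (1 : ℝ) ≃ₜ AddCircle (1 : ℝ),
      ∀ x, h (f x) = (α : AddCircle (1 : ℝ)) + h x)
    (μ : Measure (AddCircle (1 : ℝ)))
    (τ : AddCircle (1 : ℝ) → ℝ) (hτ : Continuous τ) (hτpos : ∀ θ, 0 < τ θ)
    -- the suspension structure: `ι` is a cross-section with return map `f` and return time `τ`
    (ι : AddCircle (1 : ℝ) → M) (hι : Continuous ι) (hιinj : Function.Injective ι)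
    (hret : ∀ θ, φ (τ θ) (ι θ) = ι (f θ))
    (hmin : ∀ θ (t : ℝ), 0 < t → t < τ θ → φ t (ι θ) ∉ Set.range ι)
    -- continued-fraction denominators of `α`
    (q : ℕ → ℕ) (p : ℕ → ℤ) (hq : ∀ n, 0 < q n) (hqmono : Tendsto q atTop atTop)
    (hconv : ∀ n, |α - (p n : ℝ) / (q n : ℝ)| < 1 / (q n : ℝ) ^ 2)
    -- the Denjoy–Koksma type estimate
    (hDK : Tendsto (fun n => ⨆ x : AddCircle (1 : ℝ),
        |(∑ l ∈ Finset.range (q n), τ (f^[l] x)) - (∫ y, τ y ∂μ) * (q n : ℝ)|)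
      atTop (𝓝 0)) :
    ¬ (∀ ε : ℝ, 0 < ε → ∃ δ : ℝ, 0 < δ ∧ ∀ x y : M,
        (∀ t : ℝ, dist (φ t x) (φ t y) < δ) → ∃ s : ℝ, |s| < ε ∧ y = φ s x) := by
  intro hexp
  obtain ⟨h, hh⟩ := hconj
  have hsemi : Function.Semiconj h f ((α : AddCircle (1 : ℝ)) + ·) := hh
  obtain ⟨θm, -, hθm⟩ := isCompact_univ.exists_isMinOn univ_nonempty hτ.continuousOn
  have hm : ∀ θ, τ θm ≤ τ θ := fun θ => hθm (mem_univ θ)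
  obtain ⟨R, hR⟩ := (isCompact_range hτ).bddAbove
  obtain ⟨δ, hδ, hexpδ⟩ := hexp (τ θm) (hτpos θm)
  obtain ⟨η, hη, hchart⟩ := φ.exists_pos_forall_dist_apply_lt hι R hδ
  obtain ⟨η', hη', hrot⟩ := hsemi.exists_pos_forall_dist_iterate_lt hη
  have hsum : ∀ n, Continuous fun x => ∑ l ∈ Finset.range (q n), τ (f^[l] x) := fun n =>
    continuous_finsetSum _ fun l _ => hτ.comp (f.continuous.iterate l)
  obtain ⟨n, hn, hS⟩ :=
    (((AddCircle.tendsto_norm_nsmul_coe hq hqmono hconv).eventually_lt_const hη').and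
      (eventually_forall_abs_sub_lt_of_tendsto_iSup hsum hDK hη)).exists
  set S := birkhoffSum f τ (q n) 0
  have hclose := φ.dist_apply_apply_iterate_lt hret f.surjective (hτpos θm) hm
    (fun θ => hR ⟨θ, rfl⟩) hchart (hrot _ hn) hS 0
  obtain ⟨s, hs, hy⟩ := hexpδ _ _ hclose
  have hSm : τ θm ≤ S := (hm 0).trans (Finset.single_le_sum (f := fun l => τ (f^[l] 0))
    (fun l _ => (hτpos _).le) (Finset.mem_range.2 (hq n)))
  have hper : φ (S - s) (ι 0) = ι 0 := by
    rw [sub_eq_neg_add, φ.map_add, φ.apply_birkhoffSum_eq hret, hy, ← φ.map_add, neg_add_cancel,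
      φ.map_zero_apply]
  obtain ⟨k, hk, hfk⟩ := φ.exists_iterate_eq_of_apply_eq hret hmin hιinj (hτpos θm) hm
    (by linarith [le_abs_self s]) hper
  have hαinf : ¬IsOfFinAddOrder (α : AddCircle (1 : ℝ)) :=
    AddCircle.not_isOfFinAddOrder_iff_forall_rat_ne_div.2 fun r => by
      simpa using (hα.ne_rat r).symm
  exact hsemi.not_isPeriodicPt hαinf hk 0 hfk

/-- Let `f` be a circle homeomorphism conjugate to an irrational rotation with
unique invariant probability measure `μ`, and `τ > 0` a continuous roof function with mean
`T = ∫ τ dμ`. If the Birkhoff sums of `τ` along the continued-fraction denominators `q n`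
satisfy the Denjoy–Koksma type estimate `sup_x |Σ_{l<q n} τ(f^l x) − T·q n| → 0`, then the
suspension flow of `f` under `τ` is not kinematic expansive. -/
theorem stmt_14 {M : Type*} [MetricSpace M] [CompactSpace M]
    (φ : Flow ℝ M)
    (f : AddCircle (1 : ℝ) ≃ₜ AddCircle (1 : ℝ))
    (α : ℝ) (hα : Irrational α)
    (hconj : ∃ h : AddCircle (1 : ℝ) ≃ₜ AddCircle (1 : ℝ),
      ∀ x, h (f x) = (α : AddCircle (1 : ℝ)) + h x)
    (μ : Measure (AddCircle (1 : ℝ))) [IsProbabilityMeasure μ]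
    (hμinv : Measure.map f μ = μ)
    (hμuniq : ∀ ν : Measure (AddCircle (1 : ℝ)), IsProbabilityMeasure ν →
      Measure.map f ν = ν → ν = μ)
    (τ : AddCircle (1 : ℝ) → ℝ) (hτ : Continuous τ) (hτpos : ∀ θ, 0 < τ θ)
    -- the suspension structure: `ι` is a cross-section with return map `f` and return time `τ`
    (ι : AddCircle (1 : ℝ) → M) (hι : Continuous ι) (hιinj : Function.Injective ι)
    (hret : ∀ θ, φ (τ θ) (ι θ) = ι (f θ))
    (hmin : ∀ θ (t : ℝ), 0 < t → t < τ θ → φ t (ι θ) ∉ Set.range ι)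
    (hcover : ∀ x : M, ∃ (θ : AddCircle (1 : ℝ)) (t : ℝ), φ t (ι θ) = x)
    -- continued-fraction denominators of `α`
    (q : ℕ → ℕ) (p : ℕ → ℤ) (hq : ∀ n, 0 < q n) (hqmono : Tendsto q atTop atTop)
    (hconv : ∀ n, |α - (p n : ℝ) / (q n : ℝ)| < 1 / (q n : ℝ) ^ 2)
    -- the Denjoy–Koksma type estimate
    (hDK : Tendsto (fun n => ⨆ x : AddCircle (1 : ℝ),
        |(∑ l ∈ Finset.range (q n), τ (f^[l] x)) - (∫ y, τ y ∂μ) * (q n : ℝ)|)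
      atTop (𝓝 0)) :
    ¬ (∀ ε : ℝ, 0 < ε → ∃ δ : ℝ, 0 < δ ∧ ∀ x y : M,
        (∀ t : ℝ, dist (φ t x) (φ t y) < δ) → ∃ s : ℝ, |s| < ε ∧ y = φ s x) :=
  stmt_14_general φ f α hα hconj μ τ hτ hτpos ι hι hιinj hret hmin q p hq hqmono hconv hDK
end
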